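/- Let μ_1(a_2,...,a_n) be the Leibniz algebra with basis x_1,...,x_n, [x_i,x_1] = x_{i+1} for 1 ≤ i ≤ n-1 and [x_n,x_1] = Σ_{k=2}^n a_k x_k, with (a_2,...,a_n) ≠ 0. Then the space of derivations of μ_1(a_2,...,a_n) has dimension n-1. -/

import Mathlib

variable (K : Type*) [Field K] [CharZero K]

/-- The bracket of the null-filiform Leibniz algebra `NF^n` in the (zero-indexed)
basis `x_{i+1} = Pi.single i 1`: `[x_i, x_1] = x_{i+1}`, all other products of
basis vectors zero. -/
def nfF (n : ℕ) (u v : Fin n → K) : Fin n → K :=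
  fun k => if h : 0 < (k : ℕ) then
    v ⟨0, k.pos⟩ * u ⟨(k : ℕ) - 1, lt_of_le_of_lt (Nat.sub_le _ _) k.isLt⟩
  else 0

/-- The bracket of `NF^n` as a bilinear map. -/
noncomputable def nfb (n : ℕ) :
    (Fin n → K) →ₗ[K] (Fin n → K) →ₗ[K] (Fin n → K) :=
  LinearMap.mk₂ K (nfF K n)
    (fun u u' v => by funext k; simp only [nfF, Pi.add_apply]; split_ifs <;> ring)
    (fun c u v => by
      funext k; simp only [nfF, Pi.smul_apply, smul_eq_mul]; split_ifs <;> ring)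
    (fun u v v' => by funext k; simp only [nfF, Pi.add_apply]; split_ifs <;> ring)
    (fun c u v => by
      funext k; simp only [nfF, Pi.smul_apply, smul_eq_mul]; split_ifs <;> ring)

/-- The bracket of the algebra `μ₁(a_2, …, a_n)` in the zero-indexed basis
`x_{i+1} = Pi.single i 1`: `[x_i, x_1] = x_{i+1}` for `1 ≤ i ≤ n-1` and
`[x_n, x_1] = ∑_{k=2}^n a_k x_k` (here `a l` is the paper's `a_{l+1}`; only the
values `a l` for `l ≥ 1` occur). -/
def muF (n : ℕ) (a : Fin n → K) (u v : Fin n → K) : Fin n → K :=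
  fun k => if h : 0 < (k : ℕ) then
    v ⟨0, k.pos⟩ * (u ⟨(k : ℕ) - 1, lt_of_le_of_lt (Nat.sub_le _ _) k.isLt⟩
      + u ⟨n - 1, Nat.sub_lt k.pos Nat.one_pos⟩ * a k)
  else 0

/-- The bracket of `μ₁(a)` as a bilinear map. -/
noncomputable def mub (n : ℕ) (a : Fin n → K) :
    (Fin n → K) →ₗ[K] (Fin n → K) →ₗ[K] (Fin n → K) :=
  LinearMap.mk₂ K (muF K n a)
    (fun u u' v => by funext k; simp only [muF, Pi.add_apply]; split_ifs <;> ring)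
    (fun c u v => by
      funext k; simp only [muF, Pi.smul_apply, smul_eq_mul]; split_ifs <;> ring)
    (fun u v v' => by funext k; simp only [muF, Pi.add_apply]; split_ifs <;> ring)
    (fun c u v => by
      funext k; simp only [muF, Pi.smul_apply, smul_eq_mul]; split_ifs <;> ring)

/-- The space of derivations of `μ₁(a)`. -/
noncomputable def DerMu (n : ℕ) (a : Fin n → K) :
    Submodule K ((Fin n → K) →ₗ[K] (Fin n → K)) where
  carrier := {d | ∀ u v : Fin n → K,
    d (mub K n a u v) = mub K n a (d u) v + mub K n a u (d v)}
  add_mem' := by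
    intro d d' hd hd' u v
    simp only [LinearMap.add_apply, map_add, hd u v, hd' u v]
    abel
  zero_mem' := by intro u v; simp
  smul_mem' := by
    intro c d hd u v
    simp only [LinearMap.smul_apply, map_smul, hd u v, smul_add]

namespace Aux
variable {K} {n : ℕ} (a : Fin n → K) (hn : 0 < n)

noncomputable def Tm : Module.End K (Fin n → K) :=
  (mub K n a).flip (Pi.single ⟨0, hn⟩ 1)

lemma Tm_apply (u : Fin n → K) (k : Fin n) :
    Tm a hn u k = if h : 0 < (k : ℕ) then
      u ⟨(k : ℕ) - 1, lt_of_le_of_lt (Nat.sub_le _ _) k.isLt⟩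
        + u ⟨n - 1, Nat.sub_lt hn Nat.one_pos⟩ * a k
    else 0 := by
  show muF K n a u (Pi.single ⟨0, hn⟩ 1) k = _
  unfold muF
  split_ifs with h
  · have h1 : (⟨0, k.pos⟩ : Fin n) = ⟨0, hn⟩ := rfl
    rw [h1, Pi.single_eq_same]; ring
  · rfl

lemma mub_eq (u v : Fin n → K) :
    mub K n a u v = v ⟨0, hn⟩ • Tm a hn u := by
  funext k
  show muF K n a u v k = _
  rw [Pi.smul_apply, Tm_apply, muF]
  split_ifs with h
  · have h1 : (⟨0, k.pos⟩ : Fin n) = ⟨0, hn⟩ := rfl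
    rw [h1, smul_eq_mul]
  · simp

lemma Tm_apply_zero (u : Fin n → K) : Tm a hn u ⟨0, hn⟩ = 0 := by
  rw [Tm_apply]; simp


lemma Tm_single (i : Fin n) (h : (i : ℕ) + 1 < n) :
    Tm a hn (Pi.single i 1) = Pi.single (⟨(i : ℕ) + 1, h⟩ : Fin n) 1 := by
  funext k
  rw [Tm_apply]
  rcases Nat.eq_zero_or_pos (k : ℕ) with hk | hk
  · rw [dif_neg (by omega)]
    rw [Pi.single_apply, if_neg (by intro he; rw [he] at hk; simp at hk)]
  · rw [dif_pos hk]
    have h2 : (⟨n - 1, Nat.sub_lt hn Nat.one_pos⟩ : Fin n) ≠ i := by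
      intro he
      have := congrArg Fin.val he
      simp at this; omega
    rw [Pi.single_apply, Pi.single_apply, if_neg h2, zero_mul, add_zero,
      Pi.single_apply]
    by_cases h3 : (k : ℕ) = (i : ℕ) + 1
    · rw [if_pos (by apply Fin.ext; simpa using by omega), if_pos (Fin.ext h3)]
    · rw [if_neg (by intro he; have := congrArg Fin.val he; simp at this; omega),
        if_neg (by intro he; have := congrArg Fin.val he; simp at this; omega)]

lemma Tm_single_last (h0 : a ⟨0, hn⟩ = 0) :
    Tm a hn (Pi.single (⟨n - 1, Nat.sub_lt hn Nat.one_pos⟩ : Fin n) 1) = a := by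
  funext k
  rw [Tm_apply]
  rcases Nat.eq_zero_or_pos (k : ℕ) with hk | hk
  · rw [dif_neg (by omega)]
    have : k = ⟨0, hn⟩ := Fin.ext hk
    rw [this, h0]
  · rw [dif_pos hk, Pi.single_eq_same, one_mul, Pi.single_apply,
      if_neg (by intro he; have := congrArg Fin.val he; simp at this; omega), zero_add]

lemma Tm_pow_single (k : ℕ) (hk : k < n) :
    (Tm a hn ^ k) (Pi.single (⟨0, hn⟩ : Fin n) 1) = Pi.single (⟨k, hk⟩ : Fin n) 1 := by
  induction k with
  | zero => simp
  | succ m ih =>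
    rw [pow_succ', Module.End.mul_apply, ih (by omega), Tm_single a hn ⟨m, by omega⟩ hk]

lemma sum_single (w : Fin n → K) : ∑ k : Fin n, w k • (Pi.single k 1 : Fin n → K) = w := by
  funext m
  rw [Finset.sum_apply]
  simp [Pi.single_apply]

lemma Tm_pow_n (h0 : a ⟨0, hn⟩ = 0) :
    (Tm a hn ^ n) (Pi.single (⟨0, hn⟩ : Fin n) 1) = a := by
  have hn1 : n = (n - 1) + 1 := by omega
  have e1 : Tm a hn ^ n = Tm a hn * Tm a hn ^ (n - 1) := by
    rw [← pow_succ' (Tm a hn) (n - 1), ← hn1]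
  rw [e1, Module.End.mul_apply, Tm_pow_single a hn (n - 1) (by omega),
    Tm_single_last a hn h0]

lemma ext_singles {f g : Module.End K (Fin n → K)}
    (h : ∀ i : Fin n, f (Pi.single i 1) = g (Pi.single i 1)) : f = g := by
  apply LinearMap.pi_ext
  intro i x
  have : (Pi.single i x : Fin n → K) = x • (Pi.single i 1 : Fin n → K) := by
    funext m; rw [Pi.smul_apply, Pi.single_apply, Pi.single_apply]
    split_ifs <;> simp
  rw [this, map_smul, map_smul, h i]

lemma Tm_pow_eq (h0 : a ⟨0, hn⟩ = 0) :
    Tm a hn ^ n = ∑ k : Fin n, a k • Tm a hn ^ (k : ℕ) := by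
  apply ext_singles
  intro i
  have hi : (Pi.single i 1 : Fin n → K) = (Tm a hn ^ (i:ℕ)) (Pi.single ⟨0,hn⟩ 1) := by
    rw [Tm_pow_single a hn i i.isLt]
  have comm : ∀ j : ℕ, ∀ x, (Tm a hn ^ j) ((Tm a hn ^ (i:ℕ)) x)
      = (Tm a hn ^ (i:ℕ)) ((Tm a hn ^ j) x) := by
    intro j x
    rw [← Module.End.mul_apply, ← Module.End.mul_apply, ← pow_add, ← pow_add,
      Nat.add_comm]
  rw [hi, comm n, Tm_pow_n a hn h0, LinearMap.sum_apply]
  have key : ∀ k : Fin n,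
      (a k • Tm a hn ^ (k:ℕ)) ((Tm a hn ^ (i:ℕ)) (Pi.single ⟨0,hn⟩ 1))
      = (Tm a hn ^ (i:ℕ)) (a k • (Pi.single k 1 : Fin n → K)) := by
    intro k
    rw [LinearMap.smul_apply, comm (k:ℕ), Tm_pow_single a hn k k.isLt, map_smul]
  rw [Finset.sum_congr rfl fun k _ => key k, ← map_sum, sum_single]

lemma der_op {d : (Fin n → K) →ₗ[K] (Fin n → K)}
    (hd : ∀ u v, d (mub K n a u v) = mub K n a (d u) v + mub K n a u (d v)) :
    d * Tm a hn = Tm a hn * d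
      + (d (Pi.single ⟨0, hn⟩ 1) ⟨0, hn⟩) • Tm a hn := by
  apply LinearMap.ext; intro u
  have h := hd u (Pi.single ⟨0, hn⟩ 1)
  rw [mub_eq a hn u (Pi.single ⟨0, hn⟩ 1), mub_eq a hn (d u) (Pi.single ⟨0, hn⟩ 1),
    mub_eq a hn u (d (Pi.single ⟨0, hn⟩ 1)), Pi.single_eq_same, one_smul, one_smul] at h
  simpa [Module.End.mul_apply, LinearMap.add_apply, LinearMap.smul_apply] using h

lemma der_op_pow {d : Module.End K (Fin n → K)} {α : K}
    (hc : d * Tm a hn = Tm a hn * d + α • Tm a hn) (k : ℕ) :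
    d * Tm a hn ^ k = Tm a hn ^ k * d + ((k : K) * α) • Tm a hn ^ k := by
  induction k with
  | zero => simp
  | succ m ih =>
    calc d * Tm a hn ^ (m + 1) = (d * Tm a hn ^ m) * Tm a hn := by
          rw [pow_succ, mul_assoc]
      _ = (Tm a hn ^ m * d + ((m : K) * α) • Tm a hn ^ m) * Tm a hn := by rw [ih]
      _ = Tm a hn ^ m * (d * Tm a hn)
            + ((m : K) * α) • (Tm a hn ^ m * Tm a hn) := by
          rw [add_mul, mul_assoc, smul_mul_assoc]
      _ = Tm a hn ^ m * (Tm a hn * d + α • Tm a hn)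
            + ((m : K) * α) • (Tm a hn ^ m * Tm a hn) := by rw [hc]
      _ = Tm a hn ^ m * Tm a hn * d + α • (Tm a hn ^ m * Tm a hn)
            + ((m : K) * α) • (Tm a hn ^ m * Tm a hn) := by
          rw [mul_add, mul_smul_comm, mul_assoc]
      _ = Tm a hn ^ (m + 1) * d
            + (α + (m : K) * α) • Tm a hn ^ (m + 1) := by
          rw [← pow_succ, add_assoc, ← add_smul]
      _ = Tm a hn ^ (m + 1) * d
            + (((m + 1 : ℕ) : K) * α) • Tm a hn ^ (m + 1) := by
          congr 2
          push_cast
          ring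

lemma alpha_zero (h0 : a ⟨0, hn⟩ = 0) (ha : a ≠ 0)
    {d : Module.End K (Fin n → K)} {α : K}
    (hc : ∀ k : ℕ, d * Tm a hn ^ k
      = Tm a hn ^ k * d + ((k : K) * α) • Tm a hn ^ k) : α = 0 := by
  have happ : ∀ k : ℕ, d ((Tm a hn ^ k) (Pi.single ⟨0, hn⟩ 1))
      = (Tm a hn ^ k) (d (Pi.single ⟨0, hn⟩ 1))
        + ((k : K) * α) • (Tm a hn ^ k) (Pi.single ⟨0, hn⟩ 1) := by
    intro k
    have h2 := congrArg
      (fun f : Module.End K (Fin n → K) => f (Pi.single ⟨0, hn⟩ 1)) (hc k)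
    simpa [Module.End.mul_apply] using h2
  have hsingle : ∀ m : Fin n, d (Pi.single m 1)
      = (Tm a hn ^ (m : ℕ)) (d (Pi.single ⟨0, hn⟩ 1))
        + (((m : ℕ) : K) * α) • (Pi.single m 1 : Fin n → K) := by
    intro m
    have h2 := happ (m : ℕ)
    rwa [Tm_pow_single a hn m m.isLt] at h2
  have hda : d a = (Tm a hn ^ n) (d (Pi.single ⟨0, hn⟩ 1)) + ((n : K) * α) • a := by
    have h2 := happ n
    rwa [Tm_pow_n a hn h0] at h2
  have hTn : (Tm a hn ^ n) (d (Pi.single ⟨0, hn⟩ 1))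
      = ∑ m : Fin n, a m • (Tm a hn ^ (m : ℕ)) (d (Pi.single ⟨0, hn⟩ 1)) := by
    rw [Tm_pow_eq a hn h0]
    simp [LinearMap.sum_apply]
  have hda2 : d a
      = ∑ m : Fin n, a m • (Tm a hn ^ (m : ℕ)) (d (Pi.single ⟨0, hn⟩ 1))
        + ∑ m : Fin n, (a m * (((m : ℕ) : K) * α)) • (Pi.single m 1 : Fin n → K) := by
    conv_lhs => rw [← sum_single a]
    rw [map_sum, ← Finset.sum_add_distrib]
    refine Finset.sum_congr rfl fun m _ => ?_
    rw [map_smul, hsingle m, smul_add, smul_smul]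
  have heq : ∑ m : Fin n, (a m * (((m : ℕ) : K) * α)) • (Pi.single m 1 : Fin n → K)
      = ((n : K) * α) • a := by
    have h3 := hda
    rw [hda2] at h3
    rw [hTn] at h3
    exact add_left_cancel h3
  obtain ⟨m0, hm0⟩ := Function.ne_iff.mp ha
  have hm0pos : 0 < (m0 : ℕ) := by
    rcases Nat.eq_zero_or_pos (m0 : ℕ) with h | h
    · exfalso
      apply hm0
      have h4 : m0 = ⟨0, hn⟩ := Fin.ext h
      rw [h4]
      exact h0
    · exact h
  have hco := congrFun heq m0
  rw [Finset.sum_apply] at hco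
  simp only [Pi.smul_apply, Pi.single_apply, smul_eq_mul, mul_ite, mul_one, mul_zero,
    Finset.sum_ite_eq] at hco
  simp only [Finset.mem_univ, if_true] at hco
  -- hco : a m0 * ((m0 : K) * α) = n * α * a m0
  have hcast : ((m0 : ℕ) : K) ≠ (n : K) := by
    intro h
    have h5 : (m0 : ℕ) = n := Nat.cast_inj.mp h
    omega
  have hfin : α * (a m0 * (((m0 : ℕ) : K) - (n : K))) = 0 := by
    linear_combination hco
  rcases mul_eq_zero.mp hfin with h | h
  · exact h
  · rcases mul_eq_zero.mp h with h | h
    · exact absurd h hm0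
    · exact absurd (sub_eq_zero.mp h) hcast

noncomputable def Dw (w : Fin n → K) : Module.End K (Fin n → K) :=
  ∑ j : Fin n, w j • Tm a hn ^ (j : ℕ)

lemma Dw_comm (w : Fin n → K) : Dw a hn w * Tm a hn = Tm a hn * Dw a hn w := by
  rw [Dw, Finset.sum_mul, Finset.mul_sum]
  refine Finset.sum_congr rfl fun j _ => ?_
  rw [smul_mul_assoc, mul_smul_comm, ← pow_succ, ← pow_succ']

lemma Tm_pow_apply_zero (j : ℕ) (hj : 0 < j) (v : Fin n → K) :
    (Tm a hn ^ j) v ⟨0, hn⟩ = 0 := by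
  obtain ⟨m, rfl⟩ : ∃ m, j = m + 1 := ⟨j - 1, by omega⟩
  rw [pow_succ', Module.End.mul_apply]
  exact Tm_apply_zero a hn _

lemma Dw_apply_zero (w : Fin n → K) (hw : w ⟨0, hn⟩ = 0) (v : Fin n → K) :
    Dw a hn w v ⟨0, hn⟩ = 0 := by
  rw [Dw, LinearMap.sum_apply, Finset.sum_apply]
  refine Finset.sum_eq_zero fun j _ => ?_
  rw [LinearMap.smul_apply, Pi.smul_apply, smul_eq_mul]
  rcases Nat.eq_zero_or_pos (j : ℕ) with h | h
  · have hj : j = ⟨0, hn⟩ := Fin.ext h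
    rw [hj, hw, zero_mul]
  · rw [Tm_pow_apply_zero a hn _ h, mul_zero]

lemma Dw_mem (w : Fin n → K) (hw : w ⟨0, hn⟩ = 0) (u v : Fin n → K) :
    Dw a hn w (mub K n a u v)
      = mub K n a (Dw a hn w u) v + mub K n a u (Dw a hn w v) := by
  rw [mub_eq a hn u v, mub_eq a hn (Dw a hn w u) v, mub_eq a hn u (Dw a hn w v)]
  rw [Dw_apply_zero a hn w hw v, zero_smul, add_zero, map_smul]
  congr 1
  rw [← Module.End.mul_apply, ← Module.End.mul_apply, Dw_comm]

lemma Dw_e0 (w : Fin n → K) :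
    Dw a hn w (Pi.single (⟨0, hn⟩ : Fin n) 1) = w := by
  rw [Dw, LinearMap.sum_apply]
  calc ∑ j : Fin n, (w j • Tm a hn ^ (j : ℕ)) (Pi.single (⟨0, hn⟩ : Fin n) 1)
      = ∑ j : Fin n, w j • (Pi.single j 1 : Fin n → K) := by
        refine Finset.sum_congr rfl fun j _ => ?_
        rw [LinearMap.smul_apply, Tm_pow_single a hn j j.isLt]
    _ = w := sum_single w

lemma der_zero {d : (Fin n → K) →ₗ[K] (Fin n → K)}
    (hd : ∀ u v, d (mub K n a u v) = mub K n a (d u) v + mub K n a u (d v))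
    (h00 : d (Pi.single (⟨0, hn⟩ : Fin n) 1) = 0) : d = 0 := by
  have hc := der_op a hn hd
  rw [h00] at hc
  simp only [Pi.zero_apply, zero_smul, add_zero] at hc
  have hpow : ∀ k : ℕ, d ((Tm a hn ^ k) (Pi.single (⟨0, hn⟩ : Fin n) 1)) = 0 := by
    intro k
    induction k with
    | zero => simpa using h00
    | succ m ih =>
      rw [pow_succ', Module.End.mul_apply, ← Module.End.mul_apply d, hc,
        Module.End.mul_apply, ih, map_zero]
  apply ext_singles
  intro i
  rw [← Tm_pow_single a hn i i.isLt, hpow (i : ℕ), LinearMap.zero_apply]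

end Aux

/-- for `(a_2, …, a_n) ≠ 0`, the space of derivations of the Leibniz
algebra `μ₁(a_2, …, a_n)` has dimension `n - 1`. -/
theorem dim_der_mu (n : ℕ) (hn : 2 ≤ n) (a : Fin n → K)
    (h0 : a ⟨0, by omega⟩ = 0) (ha : a ≠ 0) :
    Module.finrank K (DerMu K n a) = n - 1 := by
  classical
  have hn0 : 0 < n := by omega
  have h0' : a ⟨0, hn0⟩ = 0 := h0
  let ev : (DerMu K n a) →ₗ[K] (Fin n → K) :=
    { toFun := fun d => d.1 (Pi.single (⟨0, hn0⟩ : Fin n) 1)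
      map_add' := fun d d' => rfl
      map_smul' := fun c d => rfl }
  have hker : LinearMap.ker ev = ⊥ := by
    rw [LinearMap.ker_eq_bot']
    intro d hd0
    exact Subtype.ext (Aux.der_zero a hn0 d.2 hd0)
  have hrange : LinearMap.range ev
      = LinearMap.ker (LinearMap.proj (⟨0, hn0⟩ : Fin n) :
          (Fin n → K) →ₗ[K] K) := by
    apply le_antisymm
    · rintro w ⟨d, rfl⟩
      simp only [LinearMap.mem_ker, LinearMap.proj_apply]
      exact Aux.alpha_zero a hn0 h0' ha
        (Aux.der_op_pow a hn0 (Aux.der_op a hn0 d.2))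
    · intro w hw
      have hw0 : w ⟨0, hn0⟩ = 0 := hw
      exact LinearMap.mem_range.mpr
        ⟨⟨Aux.Dw a hn0 w, fun u v => Aux.Dw_mem a hn0 w hw0 u v⟩,
          Aux.Dw_e0 a hn0 w⟩
  have h1 : Module.finrank K (DerMu K n a)
      = Module.finrank K (LinearMap.range ev) :=
    by
      have hinj : Function.Injective ev := fun x y hxy => by
        have h00 : (x - y).1 (Pi.single (⟨0, hn0⟩ : Fin n) 1) = 0 := by
          show x.1 (Pi.single (⟨0, hn0⟩ : Fin n) 1) - y.1 (Pi.single (⟨0, hn0⟩ : Fin n) 1) = 0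
          exact sub_eq_zero.mpr hxy
        have := Aux.der_zero a hn0 (x - y).2 h00
        exact sub_eq_zero.mp (Subtype.ext this)
      exact (LinearMap.finrank_range_of_inj hinj).symm
  have hsurj : Function.Surjective (LinearMap.proj (⟨0, hn0⟩ : Fin n) :
      (Fin n → K) →ₗ[K] K) := fun c => ⟨fun _ => c, rfl⟩
  have h2 := LinearMap.finrank_range_add_finrank_ker
    (LinearMap.proj (⟨0, hn0⟩ : Fin n) : (Fin n → K) →ₗ[K] K)
  rw [LinearMap.range_eq_top.mpr hsurj, finrank_top, Module.finrank_self] at h2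
  have h3 : Module.finrank K (Fin n → K) = n := by simp
  rw [h3] at h2
  rw [h1, hrange]
  omega
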